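/- arXiv:1801.07953 — 2 statements merged into one kernel-verified Lean document; each statement's English description precedes it below -/
import Mathlib

section
/- Let n, m ∈ ℕ and let A₁,…,Aₘ, B₁,…,Bₘ, X be n×n complex matrices. Then ‖Σ_{j=1}^m Aⱼᴴ X Bⱼ‖_F ≤ ‖Σ_{j=1}^m Bⱼᴴ Bⱼ‖_op^{1/2} · ‖(Σ_{j=1}^m Aⱼ Aⱼᴴ)^{1/2} · X‖_F. -/
/-!
With `Z = ∑ⱼ Aⱼᴴ X Bⱼ`, cyclicity of the trace gives `‖Z‖² = ∑ⱼ Re tr((Z Bⱼᴴ)ᴴ (Aⱼᴴ X))`, and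
Cauchy–Schwarz bounds this by `(∑ⱼ ‖Z Bⱼᴴ‖²)^{1/2} (∑ⱼ ‖Aⱼᴴ X‖²)^{1/2}`. The first sum is
`tr(Z T Zᴴ)` with `T = ∑ⱼ Bⱼᴴ Bⱼ`, at most `‖T‖_op ‖Z‖²` because `T ≤ ‖T‖_op • 1`; the second is
`tr(Xᴴ S X) = ‖S^{1/2} X‖²` with `S = ∑ⱼ Aⱼ Aⱼᴴ`. Dividing by `‖Z‖` gives the inequality.
-/

open Matrix
open scoped ComplexOrder

/-- The Frobenius (Hilbert–Schmidt) norm of a complex matrix. -/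
noncomputable def frobeniusNorm {n : ℕ} (M : Matrix (Fin n) (Fin n) ℂ) : ℝ :=
  Real.sqrt (∑ i, ∑ j, ‖M i j‖ ^ 2)

/-- The ℓ²→ℓ² operator norm of a complex matrix. -/
noncomputable def l2OpNorm {n : ℕ} (M : Matrix (Fin n) (Fin n) ℂ) : ℝ :=
  ‖(Matrix.toEuclideanCLM (𝕜 := ℂ) M : EuclideanSpace ℂ (Fin n) →L[ℂ] EuclideanSpace ℂ (Fin n))‖

/-- The positive semidefinite square root of a positive semidefinite matrix
(the definition `Matrix.PosSemidef.sqrt` of the older Mathlib, since removed). -/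
noncomputable def Matrix.PosSemidef.sqrt {n : Type*} [Fintype n] [DecidableEq n] {𝕜 : Type*} [RCLike 𝕜]
    {A : Matrix n n 𝕜} (hA : A.PosSemidef) : Matrix n n 𝕜 :=
  hA.1.eigenvectorUnitary.1 * diagonal ((↑) ∘ (√·) ∘ hA.1.eigenvalues) *
  (star hA.1.eigenvectorUnitary : Matrix n n 𝕜)

/-- A sum of matrices of the form `A Aᴴ` is positive semidefinite. -/
lemma posSemidef_sum_mul_conjTranspose {n m : ℕ} (A : Fin m → Matrix (Fin n) (Fin n) ℂ) :
    (∑ j, A j * (A j)ᴴ).PosSemidef := by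
  apply Finset.sum_induction
  · exact fun a b ha hb => ha.add hb
  · exact Matrix.PosSemidef.zero
  · exact fun i _ => Matrix.posSemidef_self_mul_conjTranspose (A i)

lemma trace_conjTranspose_mul_sum_mul_mul {ι κ R : Type*} [Fintype ι] [Fintype κ] [CommRing R]
    [StarRing R] (Z X : Matrix ι ι R) (A B : κ → Matrix ι ι R) :
    (Zᴴ * ∑ j, (A j)ᴴ * X * B j).trace = ∑ j, ((Z * (B j)ᴴ)ᴴ * ((A j)ᴴ * X)).trace := by
  simp only [Finset.mul_sum, trace_sum, conjTranspose_mul, conjTranspose_conjTranspose]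
  refine Finset.sum_congr rfl fun j _ => ?_
  rw [mul_assoc (B j), trace_mul_comm (B j)]
  simp only [mul_assoc]

section FrobeniusNorm

variable {n : ℕ}

lemma frobeniusNorm_nonneg (M : Matrix (Fin n) (Fin n) ℂ) : 0 ≤ frobeniusNorm M :=
  Real.sqrt_nonneg _

lemma frobeniusNorm_sq (M : Matrix (Fin n) (Fin n) ℂ) :
    frobeniusNorm M ^ 2 = (Mᴴ * M).trace.re := by
  rw [frobeniusNorm, Real.sq_sqrt (by positivity), trace, Complex.re_sum, Finset.sum_comm]
  simp [mul_apply, Complex.re_sum, Complex.sq_norm, Complex.normSq_apply]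

lemma re_trace_conjTranspose_mul_le (U V : Matrix (Fin n) (Fin n) ℂ) :
    (Uᴴ * V).trace.re ≤ frobeniusNorm U * frobeniusNorm V := by
  calc (Uᴴ * V).trace.re = ∑ p : Fin n × Fin n, (star (U p.1 p.2) * V p.1 p.2).re := by
        simp only [trace, diag, mul_apply, conjTranspose_apply, Complex.re_sum,
          Fintype.sum_prod_type]
        exact Finset.sum_comm
    _ ≤ ∑ p : Fin n × Fin n, ‖U p.1 p.2‖ * ‖V p.1 p.2‖ := by
        gcongr with p
        exact (Complex.re_le_norm _).trans_eq (by rw [norm_mul, norm_star])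
    _ ≤ _ := by
        simpa only [frobeniusNorm, Fintype.sum_prod_type] using
          Real.sum_mul_le_sqrt_mul_sqrt Finset.univ
            (fun p : Fin n × Fin n => ‖U p.1 p.2‖) (fun p => ‖V p.1 p.2‖)

open scoped MatrixOrder Matrix.Norms.L2Operator in
lemma re_trace_mul_mul_conjTranspose_le {T : Matrix (Fin n) (Fin n) ℂ} (hT : T.IsHermitian)
    (Z : Matrix (Fin n) (Fin n) ℂ) :
    (Z * T * Zᴴ).trace.re ≤ l2OpNorm T * frobeniusNorm Z ^ 2 := by
  have hle : Z * T * star Z ≤ Z * algebraMap ℝ _ (l2OpNorm T) * star Z :=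
    star_right_conjugate_le_conjugate (IsSelfAdjoint.le_algebraMap_norm_self hT.isSelfAdjoint) Z
  have htrace := (Complex.le_def.mp ((tracePositiveLinearMap (Fin n) ℝ ℂ).monotone hle)).1
  rw [frobeniusNorm_sq, trace_mul_comm Zᴴ]
  simpa [Algebra.algebraMap_eq_smul_one, trace_smul, star_eq_conjTranspose] using htrace

lemma sum_frobeniusNorm_mul_conjTranspose_sq_le {m : ℕ} (Z : Matrix (Fin n) (Fin n) ℂ)
    (B : Fin m → Matrix (Fin n) (Fin n) ℂ) :
    ∑ j, frobeniusNorm (Z * (B j)ᴴ) ^ 2 ≤ l2OpNorm (∑ j, (B j)ᴴ * B j) * frobeniusNorm Z ^ 2 := by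
  have hT : (∑ j, (B j)ᴴ * B j).IsHermitian := by
    simpa using (posSemidef_sum_mul_conjTranspose fun j => (B j)ᴴ).isHermitian
  calc ∑ j, frobeniusNorm (Z * (B j)ᴴ) ^ 2 = (Z * (∑ j, (B j)ᴴ * B j) * Zᴴ).trace.re := by
        simp only [frobeniusNorm_sq, Finset.mul_sum, Finset.sum_mul, trace_sum, Complex.re_sum]
        refine Finset.sum_congr rfl fun j _ => ?_
        rw [conjTranspose_mul, conjTranspose_conjTranspose, trace_mul_cycle]
        simp only [mul_assoc]
    _ ≤ _ := re_trace_mul_mul_conjTranspose_le hT Z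

end FrobeniusNorm

section Sqrt

variable {ι : Type*} [Fintype ι] [DecidableEq ι] {𝕜 : Type*} [RCLike 𝕜]

open scoped MatrixOrder

lemma Matrix.PosSemidef.sqrt_eq_cfcSqrt {A : Matrix ι ι 𝕜} (hA : A.PosSemidef) :
    hA.sqrt = CFC.sqrt A := by
  rw [CFC.sqrt_eq_cfc, cfc_nnreal_eq_real _ A, hA.1.cfc_eq]
  -- `√x` unfolds to `NNReal.sqrt x.toNNReal`, the function `CFC.sqrt` applies to the spectrum.
  simp only [PosSemidef.sqrt, IsHermitian.cfc, Unitary.conjStarAlgAut_apply, Real.sqrt]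

lemma Matrix.PosSemidef.conjTranspose_mul_sqrt_mul {A : Matrix ι ι 𝕜} (hA : A.PosSemidef)
    (X : Matrix ι ι 𝕜) : (hA.sqrt * X)ᴴ * (hA.sqrt * X) = Xᴴ * A * X := by
  rw [hA.sqrt_eq_cfcSqrt, conjTranspose_mul, ← star_eq_conjTranspose (CFC.sqrt A),
    (CFC.sqrt_nonneg A).star_eq, mul_assoc, ← mul_assoc (CFC.sqrt A),
    CFC.sqrt_mul_sqrt_self A hA.nonneg, mul_assoc]

end Sqrt

lemma sum_frobeniusNorm_conjTranspose_mul_sq {n m : ℕ} (A : Fin m → Matrix (Fin n) (Fin n) ℂ)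
    (X : Matrix (Fin n) (Fin n) ℂ) :
    ∑ j, frobeniusNorm ((A j)ᴴ * X) ^ 2 =
      frobeniusNorm ((posSemidef_sum_mul_conjTranspose A).sqrt * X) ^ 2 := by
  rw [frobeniusNorm_sq, PosSemidef.conjTranspose_mul_sqrt_mul]
  simp only [frobeniusNorm_sq, ← Complex.re_sum, ← trace_sum, Finset.mul_sum, Finset.sum_mul,
    conjTranspose_mul, conjTranspose_conjTranspose, mul_assoc]

/-- Cauchy–Schwarz inequality for elementary operators on matrices, Frobenius norm version:
`‖Σ Aⱼᴴ X Bⱼ‖_F ≤ ‖Σ Bⱼᴴ Bⱼ‖_op^{1/2} · ‖(Σ Aⱼ Aⱼᴴ)^{1/2} · X‖_F`. -/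
theorem frobeniusNorm_sum_conjTranspose_mul_mul_le' {n m : ℕ}
    (A B : Fin m → Matrix (Fin n) (Fin n) ℂ) (X : Matrix (Fin n) (Fin n) ℂ) :
    frobeniusNorm (∑ j, (A j)ᴴ * X * B j) ≤
      Real.sqrt (l2OpNorm (∑ j, (B j)ᴴ * B j)) *
        frobeniusNorm ((posSemidef_sum_mul_conjTranspose A).sqrt * X) := by
  set Z := ∑ j, (A j)ᴴ * X * B j
  set c := Real.sqrt (l2OpNorm (∑ j, (B j)ᴴ * B j))
  set d := frobeniusNorm ((posSemidef_sum_mul_conjTranspose A).sqrt * X)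
  have hZ : frobeniusNorm Z ^ 2 ≤ c * d * frobeniusNorm Z := calc
    frobeniusNorm Z ^ 2 = ∑ j, ((Z * (B j)ᴴ)ᴴ * ((A j)ᴴ * X)).trace.re := by
      rw [frobeniusNorm_sq, trace_conjTranspose_mul_sum_mul_mul, Complex.re_sum]
    _ ≤ ∑ j, frobeniusNorm (Z * (B j)ᴴ) * frobeniusNorm ((A j)ᴴ * X) :=
      Finset.sum_le_sum fun j _ => re_trace_conjTranspose_mul_le _ _
    _ ≤ √(∑ j, frobeniusNorm (Z * (B j)ᴴ) ^ 2) * √(∑ j, frobeniusNorm ((A j)ᴴ * X) ^ 2) :=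
      Real.sum_mul_le_sqrt_mul_sqrt _ _ _
    _ ≤ √(l2OpNorm (∑ j, (B j)ᴴ * B j) * frobeniusNorm Z ^ 2) * d := by
      rw [sum_frobeniusNorm_conjTranspose_mul_sq, Real.sqrt_sq (frobeniusNorm_nonneg _)]
      exact mul_le_mul_of_nonneg_right
        (Real.sqrt_le_sqrt (sum_frobeniusNorm_mul_conjTranspose_sq_le Z B)) (frobeniusNorm_nonneg _)
    _ = c * d * frobeniusNorm Z := by
      rw [Real.sqrt_mul' _ (sq_nonneg _), Real.sqrt_sq (frobeniusNorm_nonneg _)]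
      ring
  have hcd : 0 ≤ c * d := mul_nonneg (Real.sqrt_nonneg _) (frobeniusNorm_nonneg _)
  nlinarith [frobeniusNorm_nonneg Z]
end

section
/- Let n, m ∈ ℕ and let A₁,…,Aₘ, B₁,…,Bₘ, X be n×n complex matrices. Then ‖Σ_{j=1}^m Aⱼᴴ X Bⱼ‖₁ ≤ ‖(Σ_{j=1}^m Aⱼ Aⱼᴴ)^{1/2} · X · (Σ_{j=1}^m Bⱼ Bⱼᴴ)^{1/2}‖₁, where ‖M‖₁ = tr((MᴴM)^{1/2}) is the trace norm. -/
open Matrix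
open scoped ComplexOrder

/-- The positive semidefinite square root of a positive semidefinite matrix, as defined in
Mathlib (December 2024) under the name `Matrix.PosSemidef.sqrt`, which has since been removed. -/
noncomputable def posSemidefSqrt {n : ℕ} {A : Matrix (Fin n) (Fin n) ℂ} (hA : A.PosSemidef) :
    Matrix (Fin n) (Fin n) ℂ :=
  (hA.1.eigenvectorUnitary : Matrix (Fin n) (Fin n) ℂ) *
    diagonal ((↑) ∘ Real.sqrt ∘ hA.1.eigenvalues) *
    (star (hA.1.eigenvectorUnitary : Matrix (Fin n) (Fin n) ℂ))

/-- The trace norm of a complex matrix: `‖M‖₁ = tr((MᴴM)^{1/2})`. -/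
noncomputable def traceNorm {n : ℕ} (M : Matrix (Fin n) (Fin n) ℂ) : ℝ :=
  ((posSemidefSqrt (Matrix.posSemidef_conjTranspose_mul_self M)).trace).re

/-!
Write `Aⱼ = P Cⱼ` and `Bⱼ = Q Dⱼ` with `P = (∑ Aⱼ Aⱼᴴ)^{1/2}`, `Q = (∑ Bⱼ Bⱼᴴ)^{1/2}` and
`∑ Cⱼ Cⱼᴴ ≤ 1`, `∑ Dⱼ Dⱼᴴ ≤ 1` (take `Cⱼ = P⁺ Aⱼ` with the pseudo-inverse `P⁺`), so that the
left-hand side is `S = ∑ Cⱼᴴ M Dⱼ` with `M = P X Q`. If `S = U |S|` is the polar decomposition,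
then `tr |S| = tr (Uᴴ S) = tr (K M)` with `K = ∑ Dⱼ Uᴴ Cⱼᴴ`, and `K` is a contraction by the
Cauchy–Schwarz inequality in the Hilbert C⋆-module of `m`-tuples of matrices. Finally
`Re tr (K M) ≤ tr |M|` for every contraction `K`, because `K + Kᴴ ≤ 2`.
-/

open scoped MatrixOrder Matrix.Norms.L2Operator

namespace CStarAlgebra

variable {A : Type*} [CStarAlgebra A] [PartialOrder A] [StarOrderedRing A]

lemma star_mul_self_le_one_iff {a : A} : star a * a ≤ 1 ↔ ‖a‖ ≤ 1 := by
  rw [← CStarAlgebra.norm_le_one_iff_of_nonneg _ (star_mul_self_nonneg a),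
    CStarRing.norm_star_mul_self, ← sq, sq_le_one_iff₀ (norm_nonneg a)]

lemma add_star_le_two_of_norm_le_one {a : A} (ha : ‖a‖ ≤ 1) : a + star a ≤ 2 := by
  have h := star_mul_self_nonneg (1 - a)
  rw [star_sub, star_one,
    show (1 - star a) * (1 - a) = 1 + star a * a - (a + star a) by noncomm_ring, sub_nonneg] at h
  calc a + star a ≤ 1 + star a * a := h
    _ ≤ 1 + 1 := by gcongr; exact star_mul_self_le_one_iff.mpr ha
    _ = 2 := one_add_one_eq_two

variable {ι : Type*} [Fintype ι]

lemma norm_sum_mul_star_le (x y : ι → A) :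
    ‖∑ i, y i * star (x i)‖ ≤ √‖∑ i, x i * star (x i)‖ * √‖∑ i, y i * star (y i)‖ := by
  simpa [WithCStarModule.pi_inner, WithCStarModule.pi_norm, WithCStarModule.inner_def] using
    CStarModule.norm_inner_le (A := A) (WithCStarModule A (ι → A))
      (x := (WithCStarModule.equiv A _).symm x) (y := (WithCStarModule.equiv A _).symm y)

lemma sqrt_norm_sum_mul_star_le_one {x : ι → A} (hx : ∑ i, x i * star (x i) ≤ 1) :
    √‖∑ i, x i * star (x i)‖ ≤ 1 := by
  rw [Real.sqrt_le_one, CStarAlgebra.norm_le_one_iff_of_nonneg _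
    (Finset.sum_nonneg fun i _ => mul_star_self_nonneg (x i))]
  exact hx

lemma norm_sum_mul_mul_star_le_one {c d : ι → A} {w : A} (hc : ∑ i, c i * star (c i) ≤ 1)
    (hd : ∑ i, d i * star (d i) ≤ 1) (hw : ‖w‖ ≤ 1) : ‖∑ i, d i * w * star (c i)‖ ≤ 1 := by
  have hwc : ∑ i, (c i * star w) * star (c i * star w) ≤ 1 := by
    refine le_trans (Finset.sum_le_sum fun i _ => ?_) hc
    simpa [mul_assoc] using
      star_right_conjugate_le_conjugate (star_mul_self_le_one_iff.mpr hw) (c i)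
  calc ‖∑ i, d i * w * star (c i)‖ = ‖∑ i, d i * star (c i * star w)‖ := by
        simp [mul_assoc]
    _ ≤ √‖∑ i, (c i * star w) * star (c i * star w)‖ * √‖∑ i, d i * star (d i)‖ :=
        norm_sum_mul_star_le _ _
    _ ≤ 1 := mul_le_one₀ (sqrt_norm_sum_mul_star_le_one hwc) (Real.sqrt_nonneg _)
        (sqrt_norm_sum_mul_star_le_one hd)

end CStarAlgebra

namespace Matrix

variable {n : Type*} [Fintype n]

lemma re_trace_le_re_trace {A B : Matrix n n ℂ} (h : A ≤ B) : A.trace.re ≤ B.trace.re := by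
  have := (le_iff.mp h).trace_nonneg
  rw [trace_sub, sub_nonneg] at this
  exact (Complex.le_def.mp this).1

variable [DecidableEq n]

lemma re_trace_mul_le {K R : Matrix n n ℂ} (hK : ‖K‖ ≤ 1) (hR : 0 ≤ R) :
    (K * R).trace.re ≤ R.trace.re := by
  set s := CFC.sqrt R
  have hs : star s = s := (CFC.sqrt_nonneg R).isSelfAdjoint.star_eq
  have hss : s * s = R := CFC.sqrt_mul_sqrt_self R hR
  have hconj := star_right_conjugate_le_conjugate (CStarAlgebra.add_star_le_two_of_norm_le_one hK) s
  rw [hs] at hconj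
  have hKR : (K * R).trace = (s * K * s).trace := by
    rw [← hss, ← mul_assoc, trace_mul_comm, mul_assoc]
  have hl : (s * (K + star K) * s).trace.re = 2 * (K * R).trace.re := by
    rw [mul_add, add_mul, trace_add, hKR,
      show s * star K * s = star (s * K * s) by simp [hs, mul_assoc],
      star_eq_conjTranspose, trace_conjTranspose]
    simp [two_mul]
  have hr : (s * 2 * s).trace.re = 2 * R.trace.re := by
    rw [mul_two, add_mul, hss, trace_add, Complex.add_re, two_mul]
  have := re_trace_le_re_trace hconj
  linarith

lemma continuousOn_spectrum (f : ℝ → ℝ) (P : Matrix n n ℂ) : ContinuousOn f (spectrum ℝ P) :=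
  P.finite_real_spectrum.continuousOn f

variable {P : Matrix n n ℂ}

-- Since `0⁻¹ = 0`, `cfc (·⁻¹) P` is the Moore–Penrose pseudo-inverse of `P`.
lemma cfc_inv_mul_mul_self (hP : IsSelfAdjoint P) : cfc (·⁻¹ : ℝ → ℝ) P * (P * P) = P := by
  have hc (f : ℝ → ℝ) := P.continuousOn_spectrum f
  calc cfc (·⁻¹ : ℝ → ℝ) P * (P * P)
      = cfc (fun x : ℝ => x⁻¹ * (x * x)) P := by
        rw [cfc_mul (·⁻¹) (fun x => x * x) P (hc _) (hc _), cfc_mul (fun x => x) (fun x => x) P,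
          cfc_id' ℝ P]
    _ = P := by
        rw [cfc_congr (g := fun x => x) fun x _ => by simp only [← mul_assoc, inv_mul_mul_self],
          cfc_id' ℝ P]

lemma mul_cfc_inv_mul_self (hP : IsSelfAdjoint P) : P * cfc (·⁻¹ : ℝ → ℝ) P * P = P := by
  have hc (f : ℝ → ℝ) := P.continuousOn_spectrum f
  calc P * cfc (·⁻¹ : ℝ → ℝ) P * P
      = cfc (fun x : ℝ => x * x⁻¹ * x) P := by
        rw [cfc_mul (fun x => x * x⁻¹) (fun x => x) P (hc _) (hc _),
          cfc_mul (fun x => x) (·⁻¹) P (hc _) (hc _), cfc_id' ℝ P]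
    _ = P := by
        rw [cfc_congr (g := fun x => x) fun x _ => mul_inv_mul_cancel x, cfc_id' ℝ P]

lemma cfc_inv_mul_mul_self_mul_cfc_inv_le_one (hP : IsSelfAdjoint P) :
    cfc (·⁻¹ : ℝ → ℝ) P * (P * P) * cfc (·⁻¹ : ℝ → ℝ) P ≤ 1 := by
  rw [cfc_inv_mul_mul_self hP]
  conv_lhs => arg 1; rw [← cfc_id' ℝ P]
  rw [← cfc_mul (fun x => x) (·⁻¹) P (P.continuousOn_spectrum _) (P.continuousOn_spectrum _)]
  exact cfc_le_one _ P fun x _ => mul_inv_le_one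

lemma mul_cfc_inv_mul_of_mul_star_le {a : Matrix n n ℂ} (hP : IsSelfAdjoint P)
    (h : a * star a ≤ P * P) : P * cfc (·⁻¹ : ℝ → ℝ) P * a = a := by
  set F := 1 - P * cfc (·⁻¹ : ℝ → ℝ) P
  have hFP : F * P = 0 := by rw [sub_mul, one_mul, mul_cfc_inv_mul_self hP, sub_self]
  have hFa : F * a * star (F * a) = 0 := by
    refine le_antisymm ?_ (mul_star_self_nonneg _)
    calc F * a * star (F * a) = F * (a * star a) * star F := by simp [mul_assoc]
      _ ≤ F * (P * P) * star F := star_right_conjugate_le_conjugate h F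
      _ = 0 := by rw [← mul_assoc, hFP, zero_mul, zero_mul]
  have hFa' := (CStarRing.mul_star_self_eq_zero_iff _).mp hFa
  rw [sub_mul, one_mul, sub_eq_zero] at hFa'
  exact hFa'.symm

lemma exists_mul_eq_and_sum_mul_star_le_one {ι : Type*} [Fintype ι] {a : ι → Matrix n n ℂ}
    (hP : IsSelfAdjoint P) (h : P * P = ∑ i, a i * star (a i)) :
    ∃ c : ι → Matrix n n ℂ, (∀ i, P * c i = a i) ∧ ∑ i, c i * star (c i) ≤ 1 := by
  set Q := cfc (·⁻¹ : ℝ → ℝ) P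
  have hQ : star Q = Q := IsSelfAdjoint.star_eq (cfc_predicate _ P)
  refine ⟨fun i => Q * a i, fun i => ?_, ?_⟩
  · rw [← mul_assoc]
    refine mul_cfc_inv_mul_of_mul_star_le hP (h ▸ ?_)
    exact Finset.single_le_sum (fun j _ => mul_star_self_nonneg (a j)) (Finset.mem_univ i)
  · calc ∑ i, Q * a i * star (Q * a i) = Q * (P * P) * Q := by
          simp [h, Finset.mul_sum, Finset.sum_mul, hQ, mul_assoc]
      _ ≤ 1 := cfc_inv_mul_mul_self_mul_cfc_inv_le_one hP

lemma exists_polar_decomposition (S : Matrix n n ℂ) :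
    ∃ U : Matrix n n ℂ, ‖U‖ ≤ 1 ∧ U * CFC.abs S = S ∧ star U * S = CFC.abs S := by
  have hS : IsSelfAdjoint (CFC.abs S) := (CFC.abs_nonneg S).isSelfAdjoint
  set Q := cfc (·⁻¹ : ℝ → ℝ) (CFC.abs S)
  have hQ : star Q = Q := IsSelfAdjoint.star_eq (cfc_predicate _ _)
  refine ⟨S * Q, ?_, ?_, ?_⟩
  · rw [← CStarAlgebra.star_mul_self_le_one_iff, star_mul, hQ, mul_assoc, ← mul_assoc (star S),
      ← CFC.abs_mul_abs, ← mul_assoc]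
    exact cfc_inv_mul_mul_self_mul_cfc_inv_le_one hS
  · have : CFC.abs S * Q * star S = star S :=
      mul_cfc_inv_mul_of_mul_star_le hS (by rw [star_star, CFC.abs_mul_abs])
    rw [mul_assoc]
    simpa only [star_mul, star_star, hQ, hS.star_eq] using congrArg star this
  · rw [star_mul, hQ, mul_assoc, ← CFC.abs_mul_abs]
    exact cfc_inv_mul_mul_self hS

lemma re_trace_mul_le_re_trace_abs {K : Matrix n n ℂ} (hK : ‖K‖ ≤ 1) (M : Matrix n n ℂ) :
    (K * M).trace.re ≤ (CFC.abs M).trace.re := by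
  obtain ⟨U, hU, hUM, -⟩ := exists_polar_decomposition M
  calc (K * M).trace.re = (K * U * CFC.abs M).trace.re := by rw [mul_assoc, hUM]
    _ ≤ (CFC.abs M).trace.re :=
      re_trace_mul_le ((norm_mul_le K U).trans (mul_le_one₀ hK (norm_nonneg U) hU))
        (CFC.abs_nonneg M)

lemma re_trace_abs_sum_star_mul_mul_le {ι : Type*} [Fintype ι] {c d : ι → Matrix n n ℂ}
    (hc : ∑ i, c i * star (c i) ≤ 1) (hd : ∑ i, d i * star (d i) ≤ 1) (M : Matrix n n ℂ) :
    (CFC.abs (∑ i, star (c i) * M * d i)).trace.re ≤ (CFC.abs M).trace.re := by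
  obtain ⟨U, hU, -, hUS⟩ := exists_polar_decomposition (∑ i, star (c i) * M * d i)
  have htr : (star U * ∑ i, star (c i) * M * d i).trace
      = ((∑ i, d i * star U * star (c i)) * M).trace := by
    simp only [Finset.mul_sum, Finset.sum_mul, trace_sum]
    refine Finset.sum_congr rfl fun i _ => ?_
    rw [← mul_assoc, trace_mul_comm, ← mul_assoc, ← mul_assoc]
  rw [← hUS, htr]
  exact re_trace_mul_le_re_trace_abs
    (CStarAlgebra.norm_sum_mul_mul_star_le_one hc hd (by rwa [norm_star])) M

end Matrix

lemma posSemidefSqrt_eq_sqrt {n : ℕ} {A : Matrix (Fin n) (Fin n) ℂ} (hA : A.PosSemidef) :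
    posSemidefSqrt hA = CFC.sqrt A := by
  rw [CFC.sqrt_eq_real_sqrt A hA.nonneg, cfcₙ_eq_cfc, hA.1.cfc_eq]
  rfl

lemma traceNorm_eq_re_trace_abs {n : ℕ} (M : Matrix (Fin n) (Fin n) ℂ) :
    traceNorm M = (CFC.abs M).trace.re := by
  rw [traceNorm, posSemidefSqrt_eq_sqrt]
  rfl

/-- Cauchy–Schwarz inequality for elementary operators on matrices, trace norm version:
`‖Σ Aⱼᴴ X Bⱼ‖₁ ≤ ‖(Σ Aⱼ Aⱼᴴ)^{1/2} · X · (Σ Bⱼ Bⱼᴴ)^{1/2}‖₁`. -/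
theorem traceNorm_sum_conjTranspose_mul_mul_le {n m : ℕ}
    (A B : Fin m → Matrix (Fin n) (Fin n) ℂ) (X : Matrix (Fin n) (Fin n) ℂ) :
    traceNorm (∑ j, (A j)ᴴ * X * B j) ≤
      traceNorm (posSemidefSqrt (posSemidef_sum_mul_conjTranspose A) * X *
        posSemidefSqrt (posSemidef_sum_mul_conjTranspose B)) := by
  have hA := (posSemidef_sum_mul_conjTranspose A).nonneg
  have hB := (posSemidef_sum_mul_conjTranspose B).nonneg
  rw [posSemidefSqrt_eq_sqrt, posSemidefSqrt_eq_sqrt]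
  set P := CFC.sqrt (∑ j, A j * (A j)ᴴ)
  set Q := CFC.sqrt (∑ j, B j * (B j)ᴴ)
  have hP : IsSelfAdjoint P := (CFC.sqrt_nonneg _).isSelfAdjoint
  have hQ : IsSelfAdjoint Q := (CFC.sqrt_nonneg _).isSelfAdjoint
  obtain ⟨C, hPC, hC⟩ :=
    Matrix.exists_mul_eq_and_sum_mul_star_le_one hP (CFC.sqrt_mul_sqrt_self _ hA)
  obtain ⟨D, hQD, hD⟩ :=
    Matrix.exists_mul_eq_and_sum_mul_star_le_one hQ (CFC.sqrt_mul_sqrt_self _ hB)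
  have hS : ∑ j, (A j)ᴴ * X * B j = ∑ j, star (C j) * (P * X * Q) * D j := by
    refine Finset.sum_congr rfl fun j _ => ?_
    rw [← hPC j, ← hQD j, ← star_eq_conjTranspose, star_mul, hP.star_eq]
    noncomm_ring
  rw [traceNorm_eq_re_trace_abs, traceNorm_eq_re_trace_abs, hS]
  exact Matrix.re_trace_abs_sum_star_mul_mul_le hC hD _
end
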